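/- arXiv:2510.13354 — 2 statements merged into one kernel-verified Lean document; each statement's English description precedes it below -/
import Mathlib

section
/- Let W₁,...,W_m be symmetric positive semidefinite m×m matrices linearly independent over ℝ, W(p) = Σᵢ pᵢWᵢ, and g(p) = tr(W(p)⁻¹) on X = {p : W(p) ≻ 0}. Then g is strictly convex on X: if xᵀ∇²g(p)x = 0 for some p ∈ X then x = 0. -/
open Matrix

section Aux

variable {n : Type*} [Fintype n] [DecidableEq n]

lemma aux_trace_conjTranspose_mul_self_nonneg (B : Matrix n n ℝ) :
    0 ≤ (Bᴴ * B).trace := by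
  rw [Matrix.trace]
  refine Finset.sum_nonneg fun j _ => ?_
  simp only [Matrix.diag_apply, Matrix.mul_apply, Matrix.conjTranspose_apply, star_trivial]
  exact Finset.sum_nonneg fun i _ => mul_self_nonneg _

lemma aux_eq_zero_of_trace_conjTranspose_mul_self (B : Matrix n n ℝ)
    (h : (Bᴴ * B).trace = 0) : B = 0 := by
  rw [← Matrix.conjTranspose_mul_self_eq_zero (A := B)]
  ext j k
  have hterm : ∀ j, 0 ≤ (Bᴴ * B) j j := by
    intro j
    simp only [Matrix.mul_apply, Matrix.conjTranspose_apply, star_trivial]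
    exact Finset.sum_nonneg fun i _ => mul_self_nonneg _
  have hdiag : ∀ j, (Bᴴ * B) j j = 0 := by
    intro j
    have := (Finset.sum_eq_zero_iff_of_nonneg (fun i _ => hterm i)).mp h
    exact this j (Finset.mem_univ j)
  have hentry : ∀ i j, B i j = 0 := by
    intro i j
    have h0 := hdiag j
    simp only [Matrix.mul_apply, Matrix.conjTranspose_apply, star_trivial] at h0
    have := (Finset.sum_eq_zero_iff_of_nonneg (fun i _ => mul_self_nonneg (B i j))).mp h0
    exact mul_self_eq_zero.mp (this i (Finset.mem_univ i))
  simp [Matrix.mul_apply, Matrix.conjTranspose_apply, hentry]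

lemma aux_trace_quad_nonneg {X : Matrix n n ℝ} (hX : X.PosSemidef) (Z : Matrix n n ℝ) :
    0 ≤ (Zᴴ * X * Z).trace := by
  exact (hX.conjTranspose_mul_mul_same Z).trace_nonneg

lemma aux_trace_quad_eq_zero {X : Matrix n n ℝ} (hX : X.PosDef) (Z : Matrix n n ℝ)
    (h : (Zᴴ * X * Z).trace = 0) : Z = 0 := by
  have hPSD := hX.posSemidef
  obtain ⟨S, hS⟩ : ∃ S : Matrix n n ℝ, X = Sᴴ * S := by
    open scoped MatrixOrder in
    obtain ⟨B, hB⟩ := CStarAlgebra.nonneg_iff_eq_star_mul_self.mp hPSD.nonneg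
    exact ⟨B, hB⟩
  have hfac : Zᴴ * X * Z = (S * Z)ᴴ * (S * Z) := by
    rw [hS]
    simp only [Matrix.conjTranspose_mul, Matrix.mul_assoc]
  rw [hfac] at h
  have hSZ : S * Z = 0 := aux_eq_zero_of_trace_conjTranspose_mul_self _ h
  -- sqrt is invertible since X is PosDef
  have hdet : IsUnit S.det := by
    have : S.det * S.det = X.det := by
      rw [hS, Matrix.det_mul, Matrix.det_conjTranspose, star_trivial]
    have hXdet : X.det ≠ 0 := ne_of_gt hX.det_pos
    refine isUnit_iff_ne_zero.mpr fun hz => hXdet ?_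
    rw [← this, hz, mul_zero]
  calc Z = S⁻¹ * (S * Z) := by
        rw [← Matrix.mul_assoc, Matrix.nonsing_inv_mul _ hdet, Matrix.one_mul]
    _ = 0 := by rw [hSZ, Matrix.mul_zero]

/-- Key expansion: tr((Y - X⁻¹)ᴴ X (Y - X⁻¹)) = tr(YᴴXY) - 2 tr Y + tr X⁻¹ for X PosDef. -/
lemma aux_expand {X : Matrix n n ℝ} (hX : X.PosDef) (Y : Matrix n n ℝ) :
    ((Y - X⁻¹)ᴴ * X * (Y - X⁻¹)).trace
      = (Yᴴ * X * Y).trace - 2 * Y.trace + X⁻¹.trace := by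
  have hdet : IsUnit X.det := ((Matrix.isUnit_iff_isUnit_det _).mp hX.isUnit)
  have hinvH : X⁻¹ᴴ = X⁻¹ := (hX.isHermitian.inv).eq
  have hXinv : X * X⁻¹ = 1 := Matrix.mul_nonsing_inv _ hdet
  have hinvX : X⁻¹ * X = 1 := Matrix.nonsing_inv_mul _ hdet
  have hexp : (Y - X⁻¹)ᴴ * X * (Y - X⁻¹)
      = Yᴴ * X * Y - Yᴴ - Y + X⁻¹ := by
    rw [Matrix.conjTranspose_sub, hinvH, Matrix.sub_mul, hinvX, Matrix.sub_mul,
      Matrix.mul_sub, Matrix.mul_sub, Matrix.one_mul,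
      Matrix.mul_assoc Yᴴ X X⁻¹, hXinv, Matrix.mul_one]
    simp only [Matrix.one_mul]
    abel
  rw [hexp]
  have htrH : Yᴴ.trace = Y.trace := by
    rw [Matrix.trace_conjTranspose, star_trivial]
  rw [Matrix.trace_add, Matrix.trace_sub, Matrix.trace_sub, htrH]
  ring

/-- Lower bound: 2 tr Y - tr(YᴴXY) ≤ tr X⁻¹. -/
lemma aux_lb {X : Matrix n n ℝ} (hX : X.PosDef) (Y : Matrix n n ℝ) :
    2 * Y.trace - (Yᴴ * X * Y).trace ≤ X⁻¹.trace := by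
  have h := aux_trace_quad_nonneg hX.posSemidef (Y - X⁻¹)
  rw [aux_expand hX Y] at h
  linarith

/-- Strict lower bound when Y ≠ X⁻¹. -/
lemma aux_lb_strict {X : Matrix n n ℝ} (hX : X.PosDef) (Y : Matrix n n ℝ)
    (hY : Y ≠ X⁻¹) :
    2 * Y.trace - (Yᴴ * X * Y).trace < X⁻¹.trace := by
  have h := aux_trace_quad_nonneg hX.posSemidef (Y - X⁻¹)
  rw [aux_expand hX Y] at h
  rcases lt_or_eq_of_le h with h' | h'
  · linarith
  · exfalso
    apply hY
    have := aux_trace_quad_eq_zero hX (Y - X⁻¹) (by rw [aux_expand hX Y]; linarith)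
    exact sub_eq_zero.mp this

lemma aux_posdef_smul {X : Matrix n n ℝ} (hX : X.PosDef) {c : ℝ} (hc : 0 < c) :
    (c • X).PosDef := by
  refine ⟨?_, fun x hx => ?_⟩
  · rw [Matrix.IsHermitian, Matrix.conjTranspose_smul, star_trivial, hX.isHermitian.eq]
  · exact (hX.smul hc).2 hx

end Aux

/-- if `W₁,…,W_m` are symmetric PSD and linearly independent over ℝ,
then `g(p) = tr((Σᵢ pᵢWᵢ)⁻¹)` is strictly convex on `X = {p : Σᵢ pᵢWᵢ ≻ 0}`. -/
theorem trace_inv_strictConvexOn {m : ℕ}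
    (W : Fin m → Matrix (Fin m) (Fin m) ℝ) (hpsd : ∀ i, (W i).PosSemidef)
    (hli : ∀ x : Fin m → ℝ, ∑ i, x i • W i = 0 → x = 0) :
    StrictConvexOn ℝ {p : Fin m → ℝ | (∑ i, p i • W i).PosDef}
      (fun p => ((∑ i, p i • W i)⁻¹).trace) := by
  set L : (Fin m → ℝ) → Matrix (Fin m) (Fin m) ℝ := fun p => ∑ i, p i • W i with hL
  have hLlin : ∀ (a b : ℝ) (p q : Fin m → ℝ),
      L (a • p + b • q) = a • L p + b • L q := by
    intro a b p q
    simp only [hL, Pi.add_apply, Pi.smul_apply, smul_eq_mul, add_smul, smul_smul,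
      Finset.sum_add_distrib, Finset.smul_sum]
  have hconv : Convex ℝ {p : Fin m → ℝ | (L p).PosDef} := by
    intro p hp q hq a b ha hb hab
    simp only [Set.mem_setOf_eq] at hp hq ⊢
    rw [hLlin]
    rcases eq_or_lt_of_le ha with ha0 | ha0
    · have hb1 : b = 1 := by linarith
      simp [← ha0, hb1, hq]
    rcases eq_or_lt_of_le hb with hb0 | hb0
    · have ha1 : a = 1 := by linarith
      simp [← hb0, ha1, hp]
    exact (aux_posdef_smul hp ha0).add (aux_posdef_smul hq hb0)
  refine ⟨hconv, ?_⟩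
  intro p hp q hq hpq a b ha hb hab
  simp only [Set.mem_setOf_eq] at hp hq
  set A := L p with hA
  set B := L q with hB
  have hCmem : (L (a • p + b • q)).PosDef :=
    hconv hp hq ha.le hb.le hab
  set C := L (a • p + b • q) with hC
  have hCAB : C = a • A + b • B := hLlin a b p q
  set Y := C⁻¹ with hY
  -- A ≠ B
  have hAB : A ≠ B := by
    intro h
    apply hpq
    have : ∑ i, (p - q) i • W i = 0 := by
      simp only [Pi.sub_apply, sub_smul, Finset.sum_sub_distrib]
      show A - B = 0
      rw [h, sub_self]
    have := hli (p - q) this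
    exact sub_eq_zero.mp (by funext i; exact congrFun this i)
  -- f(C) = 2 tr Y - tr (Yᴴ C Y)
  have hYH : Yᴴ = Y := (hCmem.isHermitian.inv).eq
  have hCinv : Y * C * Y = Y := by
    rw [hY, Matrix.nonsing_inv_mul _ ((Matrix.isUnit_iff_isUnit_det _).mp hCmem.isUnit), Matrix.one_mul]
  have hfC : C⁻¹.trace = 2 * Y.trace - (Yᴴ * C * Y).trace := by
    rw [hYH, hCinv, hY]; ring
  -- split tr(Yᴴ C Y)
  have hsplit : (Yᴴ * C * Y).trace = a * (Yᴴ * A * Y).trace + b * (Yᴴ * B * Y).trace := by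
    rw [hCAB]
    rw [Matrix.mul_add, Matrix.add_mul, Matrix.trace_add]
    rw [Matrix.mul_smul, Matrix.smul_mul, Matrix.trace_smul]
    rw [Matrix.mul_smul, Matrix.smul_mul, Matrix.trace_smul]
    simp [smul_eq_mul]
  -- Y ≠ A⁻¹ or Y ≠ B⁻¹
  have hne : Y ≠ A⁻¹ ∨ Y ≠ B⁻¹ := by
    by_contra h
    push_neg at h
    apply hAB
    have : A⁻¹ = B⁻¹ := by rw [← h.1, h.2]
    calc A = A⁻¹⁻¹ := (Matrix.nonsing_inv_nonsing_inv _ ((Matrix.isUnit_iff_isUnit_det _).mp hp.isUnit)).symm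
      _ = B⁻¹⁻¹ := by rw [this]
      _ = B := Matrix.nonsing_inv_nonsing_inv _ ((Matrix.isUnit_iff_isUnit_det _).mp hq.isUnit)
  have key : C⁻¹.trace < a * A⁻¹.trace + b * B⁻¹.trace := by
    have hdecomp : C⁻¹.trace
        = a * (2 * Y.trace - (Yᴴ * A * Y).trace)
          + b * (2 * Y.trace - (Yᴴ * B * Y).trace) := by
      rw [hfC, hsplit]
      have : a * (2 * Y.trace) + b * (2 * Y.trace) = 2 * Y.trace := by
        rw [← add_mul, hab, one_mul]
      ring_nf
      nlinarith [hab]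
    rw [hdecomp]
    rcases hne with hne | hne
    · exact add_lt_add_of_lt_of_le
        (mul_lt_mul_of_pos_left (aux_lb_strict hp Y hne) ha)
        (mul_le_mul_of_nonneg_left (aux_lb hq Y) hb.le)
    · exact add_lt_add_of_le_of_lt
        (mul_le_mul_of_nonneg_left (aux_lb hp Y) ha.le)
        (mul_lt_mul_of_pos_left (aux_lb_strict hq Y hne) hb)
  exact key
end

section
/- For A = diag(−1, 1/2, −3) ∈ ℝ^{3×3}, C = (I₂ 0), and T > 0, the output controllability Gramian W(p,T) = Σᵢ₌₁² pᵢ C(∫₀^T exp(At)eᵢeᵢᵀexp(Aᵀt)dt)Cᵀ equals diag(p₁ φ_{−1}(T), p₂ φ_{1/2}(T)) with φ_γ(T) = (e^{2γT} − 1)/(2γ); consequently inf over p in the open simplex {p₁,p₂ > 0, p₁+p₂ = 1} of λ_min(W(p,T)) equals 0, even though λ_min(W(p,T)) > 0 at every such p. -/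
open Matrix MeasureTheory

/-- The output controllability Gramian
`W_i(T) = ∫₀ᵀ C exp(At) eᵢ eᵢᵀ exp(Aᵀt) Cᵀ dt` (entrywise), `C = (I_m 0)`. -/
noncomputable def outputGramian {n m : ℕ} (hm : m ≤ n) (A : Matrix (Fin n) (Fin n) ℝ)
    (i : Fin m) (T : ℝ) : Matrix (Fin m) (Fin m) ℝ :=
  Matrix.of fun j k => ∫ t in (0:ℝ)..T,
    (NormedSpace.exp (t • A)) (Fin.castLE hm j) (Fin.castLE hm i) *
    (NormedSpace.exp (t • A)) (Fin.castLE hm k) (Fin.castLE hm i)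

/-- `φ_γ(T) = (e^{2γT} − 1)/(2γ)`. -/
noncomputable def phi (γ T : ℝ) : ℝ := (Real.exp (2 * γ * T) - 1) / (2 * γ)

/-- Smallest eigenvalue (infimum of the real spectrum) of a matrix. -/
noncomputable def lambdaMin {m : ℕ} (M : Matrix (Fin m) (Fin m) ℝ) : ℝ :=
  sInf (spectrum ℝ M)

/-- The example system matrix `A = diag(−1, 1/2, −3)`. -/
noncomputable def Aex : Matrix (Fin 3) (Fin 3) ℝ :=
  Matrix.diagonal ![-1, 1/2, -3]

/-- The output controllability Gramian `W(p,T) = p₁W₁(T) + p₂W₂(T)` for `Aex`. -/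
noncomputable def Wex (p₁ p₂ T : ℝ) : Matrix (Fin 2) (Fin 2) ℝ :=
  p₁ • outputGramian (by norm_num) Aex 0 T + p₂ • outputGramian (by norm_num) Aex 1 T

lemma exp_smul_diag (t : ℝ) (v : Fin 3 → ℝ) :
    NormedSpace.exp (t • Matrix.diagonal v) = Matrix.diagonal (fun i => Real.exp (t * v i)) := by
  rw [← Matrix.diagonal_smul, Matrix.exp_diagonal]
  have h : NormedSpace.exp (t • v) = fun i => Real.exp (t * v i) := by
    funext i
    rw [Pi.coe_exp, Pi.smul_apply, smul_eq_mul, Real.exp_eq_exp_ℝ]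
  rw [h]

lemma integral_exp_mul' (c T : ℝ) (hc : c ≠ 0) :
    ∫ t in (0:ℝ)..T, Real.exp (c * t) = (Real.exp (c * T) - 1) / c := by
  rw [intervalIntegral.integral_comp_mul_left (fun x => Real.exp x) hc]
  simp [integral_exp, mul_comm, div_eq_inv_mul]

lemma integral_sq_exp (a T : ℝ) (ha : a ≠ 0) :
    ∫ t in (0:ℝ)..T, Real.exp (t * a) * Real.exp (t * a) = phi a T := by
  have h : ∀ t : ℝ, Real.exp (t * a) * Real.exp (t * a) = Real.exp ((2 * a) * t) := by
    intro t; rw [← Real.exp_add]; ring_nf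
  simp_rw [h]
  rw [integral_exp_mul' (2 * a) T (mul_ne_zero two_ne_zero ha)]
  rfl

lemma gram_eq (i : Fin 2) (T : ℝ) (hm : 2 ≤ 3) :
    outputGramian hm Aex i T =
      Matrix.of fun j k => if j = i ∧ k = i then phi (![-1, 1/2] i) T else 0 := by
  have key : ∀ x : Fin 2, (∫ t in (0:ℝ)..T,
      Real.exp (t * ![-1, 1/2, -3] (Fin.castLE hm x)) *
      Real.exp (t * ![-1, 1/2, -3] (Fin.castLE hm x))) = phi (![-1, 1/2] x) T := by
    intro x
    rw [show ((![-1, 1/2, -3] : Fin 3 → ℝ) (Fin.castLE hm x)) = ![-1, 1/2] x from by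
      fin_cases x <;> rfl]
    exact integral_sq_exp _ T (by fin_cases x <;> norm_num)
  ext j k
  simp only [outputGramian, Matrix.of_apply, Aex, exp_smul_diag, Matrix.diagonal_apply]
  by_cases hj : j = i
  · by_cases hk : k = i
    · rw [hj, hk, if_pos (⟨rfl, rfl⟩ : i = i ∧ i = i)]
      simp only [if_pos rfl]
      exact key i
    · have h : Fin.castLE hm k ≠ Fin.castLE hm i := fun h => hk (Fin.castLE_injective hm h)
      simp [h, hk]
  · have h : Fin.castLE hm j ≠ Fin.castLE hm i := fun h => hj (Fin.castLE_injective hm h)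
    simp [h, hj]

lemma wex_eq (p₁ p₂ T : ℝ) :
    Wex p₁ p₂ T = Matrix.diagonal ![p₁ * phi (-1) T, p₂ * phi (1/2) T] := by
  unfold Wex
  rw [gram_eq 0 T, gram_eq 1 T]
  ext j k
  fin_cases j <;> fin_cases k <;>
    simp [Matrix.diagonal_apply]

lemma phi_neg_one_pos {T : ℝ} (hT : 0 < T) : 0 < phi (-1) T := by
  unfold phi
  have h1 : Real.exp (2 * (-1) * T) < 1 := Real.exp_lt_one_iff.mpr (by nlinarith)
  have h2 : Real.exp (2 * (-1) * T) - 1 < 0 := by linarith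
  exact div_pos_of_neg_of_neg h2 (by norm_num)

lemma phi_half_pos {T : ℝ} (hT : 0 < T) : 0 < phi (1/2) T := by
  unfold phi
  have : (1:ℝ) < Real.exp (2 * (1/2) * T) := Real.one_lt_exp_iff.mpr (by nlinarith)
  have h2 : 0 < Real.exp (2 * (1/2) * T) - 1 := by linarith
  positivity

lemma lambdaMin_diag (a b : ℝ) : lambdaMin (Matrix.diagonal ![a, b]) = min a b := by
  unfold lambdaMin
  rw [spectrum_diagonal]
  have : Set.range ![a, b] = {a, b} := by
    ext x
    simp [Fin.exists_fin_two, or_comm]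
  rw [this, csInf_pair]

/-- for `A = diag(−1,1/2,−3)`, `C = (I₂ 0)` and `T > 0`,
`W(p,T) = diag(p₁φ₋₁(T), p₂φ_{1/2}(T))`; `λ_min(W(p,T)) > 0` at every point of the
open simplex `{p₁,p₂ > 0, p₁+p₂=1}`, yet the infimum over that simplex of
`λ_min(W(p,T))` equals `0`. -/
theorem example_gramian_inf_lambdaMin_zero (T : ℝ) (hT : 0 < T) :
    (∀ p₁ p₂ : ℝ, Wex p₁ p₂ T = Matrix.diagonal ![p₁ * phi (-1) T, p₂ * phi (1/2) T]) ∧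
    (∀ p₁ p₂ : ℝ, 0 < p₁ → 0 < p₂ → p₁ + p₂ = 1 → 0 < lambdaMin (Wex p₁ p₂ T)) ∧
    sInf {v : ℝ | ∃ p₁ p₂ : ℝ, 0 < p₁ ∧ 0 < p₂ ∧ p₁ + p₂ = 1 ∧
      v = lambdaMin (Wex p₁ p₂ T)} = 0 := by
  have c₁ := phi_neg_one_pos hT
  have c₂ := phi_half_pos hT
  have hlam : ∀ p₁ p₂ : ℝ, lambdaMin (Wex p₁ p₂ T) = min (p₁ * phi (-1) T) (p₂ * phi (1/2) T) := by
    intro p₁ p₂; rw [wex_eq, lambdaMin_diag]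
  refine ⟨fun p₁ p₂ => wex_eq p₁ p₂ T, fun p₁ p₂ h1 h2 _ => ?_, ?_⟩
  · rw [hlam]
    exact lt_min (by positivity) (by positivity)
  · set S := {v : ℝ | ∃ p₁ p₂ : ℝ, 0 < p₁ ∧ 0 < p₂ ∧ p₁ + p₂ = 1 ∧
      v = lambdaMin (Wex p₁ p₂ T)} with hS
    have hne : S.Nonempty := ⟨lambdaMin (Wex (1/2) (1/2) T), 1/2, 1/2, by norm_num, by norm_num,
      by norm_num, rfl⟩
    have hlb : ∀ v ∈ S, (0:ℝ) ≤ v := by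
      rintro v ⟨p₁, p₂, h1, h2, _, rfl⟩
      rw [hlam]
      exact le_min (by positivity) (by positivity)
    have hbdd : BddBelow S := ⟨0, hlb⟩
    refine le_antisymm ?_ (le_csInf hne hlb)
    rw [Real.sInf_le_iff hbdd hne]
    intro ε hε
    set p₁ : ℝ := min (1/2) (ε / (2 * phi (-1) T)) with hp₁
    have hp₁pos : 0 < p₁ := lt_min (by norm_num) (by positivity)
    have hp₁le : p₁ ≤ 1/2 := min_le_left _ _
    refine ⟨lambdaMin (Wex p₁ (1 - p₁) T), ⟨p₁, 1 - p₁, hp₁pos, by linarith, by ring, rfl⟩, ?_⟩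
    rw [hlam]
    have h1 : p₁ * phi (-1) T ≤ (ε / (2 * phi (-1) T)) * phi (-1) T :=
      mul_le_mul_of_nonneg_right (min_le_right _ _) (le_of_lt c₁)
    have h2 : (ε / (2 * phi (-1) T)) * phi (-1) T = ε / 2 := by
      field_simp
    calc min (p₁ * phi (-1) T) ((1 - p₁) * phi (1/2) T) ≤ p₁ * phi (-1) T := min_le_left _ _
      _ ≤ ε / 2 := by rw [← h2]; exact h1
      _ < 0 + ε := by linarith
end
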